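/- Let f ∈ F be a non-constant 2π-periodic function and define ν(f) := max{j ∈ ℕ₊ : c_k(f) = 0 for all k ∈ ℤ not divisible by j}. Then ν(f) is finite, the function x ↦ f(x/ν(f)) is 2π-periodic with Fourier coefficients c_ℓ = c_{ℓ·ν(f)}(f), hence repl(f) ≥ ν(f), and the family {κ_i(f̄)}_{i∈ℕ₊} for f̄(x) := f(x/ν(f)) is setwise coprime. -/

import Mathlib

open Real Set

noncomputable section

/-- The `k`-th Fourier coefficient `c_k(f) = (1/(2π)) ∫_{-π}^{π} f(x) e^{-ikx} dx`. -/
def fc (f : ℝ → ℝ) (k : ℤ) : ℂ :=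
  (1 / (2 * (π : ℂ))) *
    ∫ x in (-π : ℝ)..π, (f x : ℂ) * Complex.exp (-Complex.I * (k : ℂ) * (x : ℂ))

/-- The class `F` of oscillation patterns: 2π-periodic functions with square-summable
Fourier coefficients which represent the function. -/
def IsOscPattern (f : ℝ → ℝ) : Prop :=
  (∀ x : ℝ, f (x + 2 * π) = f x) ∧
  Summable (fun k : ℤ => ‖fc f k‖ ^ 2) ∧
  ∀ x : ℝ, (f x : ℂ) = ∑' k : ℤ, fc f k * Complex.exp (Complex.I * (k : ℂ) * (x : ℂ))

/-- `repl f = sup { r : ℝ | x ↦ f(x/r) is 2π-periodic }`. -/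
def repl (f : ℝ → ℝ) : ℝ :=
  sSup {r : ℝ | ∀ x : ℝ, f ((x + 2 * π) / r) = f (x / r)}

/-- `nuF f = max { j ∈ ℕ₊ | c_k(f) = 0 for all k ∈ ℤ not divisible by j }`. -/
def nuF (f : ℝ → ℝ) : ℕ :=
  sSup {j : ℕ | 0 < j ∧ ∀ k : ℤ, ¬ ((j : ℤ) ∣ k) → fc f k = 0}

/-! The vanishing of `c_k(f)` off `νℤ` makes the Fourier series of `f`, hence `f` itself,
`2π/ν`-periodic, and substituting `x = νy` and splitting `[-π, π]` into `ν` periods gives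
`c_ℓ(f(·/ν)) = c_{ℓν}(f)`. As `f` is non-constant it has a coefficient `c_k ≠ 0` with `k ≠ 0`;
it bounds `ν`, which divides `k`, and `repl f`, since any period `t` of `f` forces
`e^{-ikt} c_k = c_k`, i.e. `kt ∈ 2πℤ`. Finally, if `e` divides every positive index with
`c_ℓ(f(·/ν)) ≠ 0`, then by `c_{-ℓ} = conj c_ℓ` it divides every such index, so `eν` is admissible
in the definition of `ν`, and maximality forces `e = 1`. -/

open Function MeasureTheory Complex ComplexConjugate

lemma fc_neg (f : ℝ → ℝ) (k : ℤ) : fc f (-k) = conj (fc f k) := by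
  simp only [fc, map_mul, ← intervalIntegral.intervalIntegral_conj, map_div₀, map_one, map_ofNat,
    conj_ofReal, ← exp_conj, map_neg, conj_I, map_intCast, Int.cast_neg]
  congr 2
  ext x
  ring_nf

section FourierCoeff

variable {f : ℝ → ℝ}

lemma intervalIntegrable_of_fc_ne_zero {k : ℤ} (hk : fc f k ≠ 0) :
    IntervalIntegrable (fun x => (f x : ℂ)) volume (-π) π := by
  -- `fc f k` is a junk `0` unless its integrand is integrable.
  have hint : IntervalIntegrable (fun x : ℝ => (f x : ℂ) * cexp (-I * k * x)) volume (-π) π := by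
    by_contra h
    exact hk (by rw [fc, intervalIntegral.integral_undef h, mul_zero])
  convert hint.mul_continuousOn
    ((continuous_const (y := I * k)).mul continuous_ofReal).cexp.continuousOn using 2 with x
  rw [mul_assoc, ← Complex.exp_add]
  ring_nf
  simp

lemma intervalIntegrable_of_periodic_of_fc_ne_zero (hper : Periodic f (2 * π)) {k : ℤ}
    (hk : fc f k ≠ 0) (a b : ℝ) : IntervalIntegrable (fun x => (f x : ℂ)) volume a b :=
  (hper.comp ((↑) : ℝ → ℂ)).intervalIntegrable (t := -π) (by positivity)
    (by rw [show -π + 2 * π = π by ring]; exact intervalIntegrable_of_fc_ne_zero hk) a b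

lemma fc_eq_exp_mul_fc (hper : Periodic f (2 * π)) {t : ℝ} (ht : Periodic f t) (k : ℤ) :
    fc f k = cexp (-I * k * t) * fc f k := by
  set H : ℝ → ℂ := fun x => (f x : ℂ) * cexp (-I * k * x)
  have hH : Periodic H (2 * π) := by
    intro x
    simp only [H, hper x]
    congr 1
    rw [show -I * k * ((x + 2 * π : ℝ) : ℂ) = -I * k * x + (-k : ℤ) * (2 * π * I) by
      push_cast; ring, Complex.exp_add, exp_int_mul_two_pi_mul_I, mul_one]
  have hHt : ∀ x, H (x + t) = cexp (-I * k * t) * H x := by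
    intro x
    simp only [H, ht x]
    rw [mul_left_comm, ← Complex.exp_add]
    push_cast
    ring_nf
  have key : ∫ x in (-π)..π, H x = cexp (-I * k * t) * ∫ x in (-π)..π, H x := by
    calc ∫ x in (-π)..π, H x = ∫ x in (-π + t)..(-π + t + 2 * π), H x := by
          rw [hH.intervalIntegral_add_eq (-π + t) (-π)]; ring_nf
      _ = ∫ x in (-π)..π, H (x + t) := by
          rw [intervalIntegral.integral_comp_add_right]; ring_nf
      _ = _ := by simp only [hHt, intervalIntegral.integral_const_mul]
  change 1 / (2 * (π : ℂ)) * ∫ x in (-π)..π, H x = _ * (1 / (2 * (π : ℂ)) * ∫ x in (-π)..π, H x)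
  rw [mul_left_comm, ← key]

lemma exists_int_mul_two_pi_eq_of_fc_ne_zero (hper : Periodic f (2 * π)) {t : ℝ}
    (ht : Periodic f t) {k : ℤ} (hk : fc f k ≠ 0) : ∃ n : ℤ, (k : ℝ) * t = n * (2 * π) := by
  have hexp : cexp (-I * k * t) = 1 :=
    (mul_eq_right₀ hk).mp (fc_eq_exp_mul_fc hper ht k).symm
  obtain ⟨n, hn⟩ := Complex.exp_eq_one_iff.mp hexp
  refine ⟨-n, ?_⟩
  have : I * ((k * t : ℝ) : ℂ) = I * ((-n * (2 * π) : ℝ) : ℂ) := by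
    push_cast
    linear_combination -hn
  exact_mod_cast mul_left_cancel₀ I_ne_zero this

lemma le_abs_of_periodic_two_pi_div (hper : Periodic f (2 * π)) {k : ℤ} (hk0 : k ≠ 0)
    (hk : fc f k ≠ 0) {r : ℝ} (hr : 0 < r) (ht : Periodic f (2 * π / r)) : r ≤ |(k : ℝ)| := by
  obtain ⟨n, hn⟩ := exists_int_mul_two_pi_eq_of_fc_ne_zero hper ht hk
  have hkn : (k : ℝ) = n * r := by
    field_simp at hn
    linarith [pi_pos]
  have hn0 : n ≠ 0 := by
    rintro rfl
    simp [hk0] at hkn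
  calc r ≤ |(n : ℝ)| * r := le_mul_of_one_le_left hr.le (by exact_mod_cast Int.one_le_abs hn0)
    _ = |(k : ℝ)| := by rw [hkn, abs_mul, abs_of_pos hr]

lemma bddAbove_replSet (hper : Periodic f (2 * π)) {k : ℤ} (hk0 : k ≠ 0) (hk : fc f k ≠ 0) :
    BddAbove {r : ℝ | ∀ x : ℝ, f ((x + 2 * π) / r) = f (x / r)} := by
  refine ⟨|(k : ℝ)|, fun r hr => ?_⟩
  rcases le_or_gt r 0 with hr0 | hr0
  · exact hr0.trans (abs_nonneg _)
  refine le_abs_of_periodic_two_pi_div hper hk0 hk hr0 fun y => ?_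
  simpa [add_div, mul_div_cancel_left₀ _ hr0.ne'] using hr (r * y)

lemma periodic_two_pi_div_of_fc_eq_zero
    (hrep : ∀ x : ℝ, (f x : ℂ) = ∑' k : ℤ, fc f k * cexp (I * k * x)) {n : ℕ} (hn : n ≠ 0)
    (hc : ∀ k : ℤ, ¬ ((n : ℤ) ∣ k) → fc f k = 0) : Periodic f (2 * π / n) := by
  intro x
  apply ofReal_injective
  rw [hrep, hrep]
  congr 1 with k
  by_cases hk : (n : ℤ) ∣ k
  · obtain ⟨m, rfl⟩ := hk
    rw [show I * ((n * m : ℤ) : ℂ) * ((x + 2 * π / n : ℝ) : ℂ)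
        = I * ((n * m : ℤ) : ℂ) * x + m * (2 * π * I) by push_cast; field_simp,
      Complex.exp_add, exp_int_mul_two_pi_mul_I, mul_one]
  · simp [hc k hk]

lemma exists_fc_ne_zero_of_ne
    (hrep : ∀ x : ℝ, (f x : ℂ) = ∑' k : ℤ, fc f k * cexp (I * k * x)) {x y : ℝ} (hxy : f x ≠ f y) :
    ∃ k : ℤ, k ≠ 0 ∧ fc f k ≠ 0 := by
  by_contra! h
  have hconst : ∀ x, (f x : ℂ) = fc f 0 := fun x => by
    rw [hrep, tsum_eq_single 0 fun k hk => by rw [h k hk, zero_mul]]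
    simp
  exact hxy (ofReal_injective ((hconst x).trans (hconst y).symm))

lemma fc_comp_div_natCast
    (hint : ∀ a b : ℝ, IntervalIntegrable (fun x => (f x : ℂ)) volume a b) {n : ℕ} (hn : n ≠ 0)
    (hper : Periodic f (2 * π / n)) (l : ℤ) : fc (fun x => f (x / n)) l = fc f (l * n) := by
  set F : ℝ → ℂ := fun y => (f y : ℂ) * cexp (-I * (l * n : ℤ) * y)
  have hF : Periodic F (2 * π / n) := by
    intro y
    simp only [F, hper y]
    congr 1
    rw [show -I * ((l * n : ℤ) : ℂ) * ((y + 2 * π / n : ℝ) : ℂ)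
        = -I * ((l * n : ℤ) : ℂ) * y + (-l : ℤ) * (2 * π * I) by push_cast; field_simp; ring,
      Complex.exp_add, exp_int_mul_two_pi_mul_I, mul_one]
  have hFint : ∀ a b, IntervalIntegrable F volume a b := fun a b =>
    (hint a b).mul_continuousOn
      ((continuous_const (y := -I * (l * n : ℤ))).mul continuous_ofReal).cexp.continuousOn
  have hnR : (n : ℝ) ≠ 0 := Nat.cast_ne_zero.mpr hn
  have hsubst : ∫ x in (-π)..π, (f (x / n) : ℂ) * cexp (-I * l * x)
      = (n : ℝ) • ∫ y in (-π / n)..(π / n), F y := by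
    rw [← intervalIntegral.integral_comp_div F hnR]
    congr 1 with x
    simp only [F]
    congr 2
    push_cast
    field_simp
  have hperiods : ∫ x in (-π)..π, F x = (n : ℤ) • ∫ y in (-π / n)..(π / n), F y := by
    have := hF.intervalIntegral_add_zsmul_eq n (-π) hFint
    rw [zsmul_eq_mul, Int.cast_natCast, mul_div_cancel₀ _ hnR, neg_add_eq_sub,
      show 2 * π - π = π by ring] at this
    rw [this, hF.intervalIntegral_add_eq (-π) (-π / n)]
    congr 2
    ring
  simp only [fc]
  rw [hsubst, hperiods, Complex.real_smul, zsmul_eq_mul]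
  push_cast
  rfl

lemma natCast_dvd_of_fc_ne_zero {e : ℕ} (he : ∀ k : ℕ, 0 < k → fc f k ≠ 0 → e ∣ k) {k : ℤ}
    (hk : fc f k ≠ 0) : (e : ℤ) ∣ k := by
  rw [Int.natCast_dvd]
  rcases Nat.eq_zero_or_pos k.natAbs with h0 | hpos
  · simp [h0]
  refine he _ hpos ?_
  rcases Int.natAbs_eq k with h | h <;> rw [h] at hk
  · exact hk
  · rwa [fc_neg, map_ne_zero] at hk

end FourierCoeff

def nuSet (f : ℝ → ℝ) : Set ℕ :=
  {j : ℕ | 0 < j ∧ ∀ k : ℤ, ¬ ((j : ℤ) ∣ k) → fc f k = 0}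

lemma one_mem_nuSet (f : ℝ → ℝ) : 1 ∈ nuSet f :=
  ⟨one_pos, fun k hk => absurd (one_dvd k) (mod_cast hk)⟩

section NuSet

variable {f : ℝ → ℝ}

lemma dvd_natAbs_of_fc_ne_zero {j : ℕ} (hj : ∀ k : ℤ, ¬ ((j : ℤ) ∣ k) → fc f k = 0) {k : ℤ}
    (hk : fc f k ≠ 0) : j ∣ k.natAbs :=
  Int.natCast_dvd.mp (not_not.mp (mt (hj k) hk))

lemma bddAbove_nuSet {k : ℤ} (hk0 : k ≠ 0) (hk : fc f k ≠ 0) : BddAbove (nuSet f) :=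
  ⟨k.natAbs, fun _ hj => Nat.le_of_dvd (Int.natAbs_pos.mpr hk0) (dvd_natAbs_of_fc_ne_zero hj.2 hk)⟩

lemma eq_one_of_mul_nuF {k : ℤ} (hk0 : k ≠ 0) (hk : fc f k ≠ 0) {e : ℕ}
    (he : ∀ k : ℤ, ¬ (((e * nuF f : ℕ) : ℤ) ∣ k) → fc f k = 0) : e = 1 := by
  have hpos : 0 < e * nuF f :=
    Nat.pos_of_dvd_of_pos (dvd_natAbs_of_fc_ne_zero he hk) (Int.natAbs_pos.mpr hk0)
  have hle : e * nuF f ≤ nuF f := le_csSup (bddAbove_nuSet hk0 hk) ⟨hpos, he⟩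
  exact le_antisymm ((mul_le_iff_le_one_left (Nat.pos_of_mul_pos_left hpos)).mp hle)
    (Nat.pos_of_mul_pos_right hpos)

end NuSet

/-- For a non-constant `f ∈ F`: `ν(f)` is well defined (the defining set is nonempty and
bounded, hence the maximum is attained and positive), `x ↦ f(x/ν(f))` is 2π-periodic with
Fourier coefficients `c_ℓ = c_{ℓ·ν(f)}(f)`, hence `repl(f) ≥ ν(f)`, and the family of
positive indices with nonzero coefficient of `f̄(x) := f(x/ν(f))` is setwise coprime. -/
theorem nu_well_defined_and_coprime
    (f : ℝ → ℝ) (hf : IsOscPattern f) (hnonconst : ∃ x y : ℝ, f x ≠ f y) :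
    ({j : ℕ | 0 < j ∧ ∀ k : ℤ, ¬ ((j : ℤ) ∣ k) → fc f k = 0}).Nonempty ∧
    BddAbove {j : ℕ | 0 < j ∧ ∀ k : ℤ, ¬ ((j : ℤ) ∣ k) → fc f k = 0} ∧
    0 < nuF f ∧
    (∀ k : ℤ, ¬ ((nuF f : ℤ) ∣ k) → fc f k = 0) ∧
    (∀ x : ℝ, f ((x + 2 * π) / (nuF f : ℝ)) = f (x / (nuF f : ℝ))) ∧
    (∀ l : ℤ, fc (fun x => f (x / (nuF f : ℝ))) l = fc f (l * (nuF f : ℤ))) ∧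
    (nuF f : ℝ) ≤ repl f ∧
    (∀ e : ℕ,
      (∀ k : ℕ, 0 < k → fc (fun x => f (x / (nuF f : ℝ))) (k : ℤ) ≠ 0 → e ∣ k) →
      e = 1) := by
  obtain ⟨hper, -, hrep⟩ := hf
  obtain ⟨x, y, hxy⟩ := hnonconst
  obtain ⟨k₀, hk₀, hfk₀⟩ := exists_fc_ne_zero_of_ne hrep hxy
  have hbdd : BddAbove (nuSet f) := bddAbove_nuSet hk₀ hfk₀
  obtain ⟨hν, hνdvd⟩ : nuF f ∈ nuSet f := Nat.sSup_mem ⟨1, one_mem_nuSet f⟩ hbdd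
  have hperν := periodic_two_pi_div_of_fc_eq_zero hrep hν.ne' hνdvd
  have hscaled : ∀ x : ℝ, f ((x + 2 * π) / nuF f) = f (x / nuF f) := fun x => by
    rw [add_div]; exact hperν _
  have hcoeff :=
    fc_comp_div_natCast (intervalIntegrable_of_periodic_of_fc_ne_zero hper hfk₀) hν.ne' hperν
  refine ⟨⟨1, one_mem_nuSet f⟩, hbdd, hν, hνdvd, hscaled, hcoeff,
    le_csSup (bddAbove_replSet hper hk₀ hfk₀) hscaled, fun e he => eq_one_of_mul_nuF hk₀ hfk₀ ?_⟩
  intro k hk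
  by_contra hfk
  obtain ⟨l, rfl⟩ := Int.natCast_dvd.mpr (dvd_natAbs_of_fc_ne_zero hνdvd hfk)
  rw [mul_comm, ← hcoeff] at hfk
  obtain ⟨m, rfl⟩ := natCast_dvd_of_fc_ne_zero he hfk
  exact hk ⟨m, by push_cast; ring⟩
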